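/- arXiv:2305.02458 — 2 statements merged into one kernel-verified Lean document; each statement's English description precedes it below -/
import Mathlib

section
/- Let T : ℝ^n → ℝ^n be a Shapley operator, let q ≥ 1 and 0 < γ < 1 be such that T^q is a γ-contraction in the Hilbert seminorm (‖T^q(x) − T^q(y)‖_H ≤ γ‖x − y‖_H for all x, y), let η ≥ 0, and let T̃ : ℝ^n → ℝ^n satisfy ‖T̃(x) − T(x)‖_∞ ≤ η for all x. Define R(x) = x − t(x)·e, x_k = (R∘T)^k(0) and x̃_k = (R∘T̃)^k(0). Then for every integer k ≥ 0, ‖x̃_{qk} − x_{qk}‖_H ≤ 2qη/(1 − γ). -/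
/-- Hilbert's seminorm `‖x‖_H = max_i x_i - min_i x_i` on `ℝ^n`. -/
noncomputable def hilbertSeminorm {n : ℕ} (x : Fin n → ℝ) : ℝ :=
  (⨆ i, x i) - (⨅ i, x i)

/-!
Shapley operators are nonexpansive in Hilbert's seminorm, and the normalization `R` is invisible
to it. Along one block of `q` steps the approximate iteration therefore drifts from the exact
iteration `T^q` by at most `2η` per step, i.e. `2qη` in total, while `T^q` contracts the error
carried over from the previous block by `γ`. The error `d_k` after `k` blocks thus satisfies
`d_0 = 0` and `d_{k+1} ≤ 2qη + γ d_k`, whence `d_k ≤ 2qη / (1 - γ)`.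
-/

structure IsShapleyOperator {ι : Type*} (T : (ι → ℝ) → ι → ℝ) : Prop where
  monotone : Monotone T
  map_add_const : ∀ (x : ι → ℝ) (c : ℝ), T (fun i => x i + c) = fun i => T x i + c

theorem IsShapleyOperator.iterate {ι : Type*} {T : (ι → ℝ) → ι → ℝ}
    (hT : IsShapleyOperator T) (j : ℕ) : IsShapleyOperator T^[j] := by
  refine ⟨hT.monotone.iterate j, fun x c => ?_⟩
  induction j with
  | zero => rfl
  | succ j ih => rw [Function.iterate_succ_apply', ih, hT.map_add_const, Function.iterate_succ_apply']

theorem IsShapleyOperator.exists_iterate_comp_eq_add_const {ι : Type*}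
    {T R : (ι → ℝ) → ι → ℝ} (hT : IsShapleyOperator T)
    (hR : ∀ x, ∃ c : ℝ, R x = fun i => x i + c) (j : ℕ) (v : ι → ℝ) :
    ∃ c : ℝ, (R ∘ T)^[j] v = fun i => T^[j] v i + c := by
  induction j with
  | zero => exact ⟨0, by simp⟩
  | succ j ih =>
    obtain ⟨c, hc⟩ := ih
    obtain ⟨d, hd⟩ := hR (T ((R ∘ T)^[j] v))
    refine ⟨c + d, ?_⟩
    rw [Function.iterate_succ_apply', Function.comp_apply, hd, hc, hT.map_add_const,
      Function.iterate_succ_apply']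
    simp only [add_assoc]

theorem le_div_one_sub_of_le_add_mul {d : ℕ → ℝ} {a γ : ℝ} (hγ0 : 0 ≤ γ) (hγ1 : γ < 1)
    (h0 : d 0 ≤ a / (1 - γ)) (hsucc : ∀ k, d (k + 1) ≤ a + γ * d k) (k : ℕ) :
    d k ≤ a / (1 - γ) := by
  induction k with
  | zero => exact h0
  | succ k ih =>
    have hγ : 1 - γ ≠ 0 := by linarith
    calc d (k + 1) ≤ a + γ * (a / (1 - γ)) := (hsucc k).trans (by gcongr)
      _ = a / (1 - γ) := by field_simp; ring

theorem sub_le_hilbertSeminorm {n : ℕ} (x : Fin n → ℝ) (i j : Fin n) :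
    x i - x j ≤ hilbertSeminorm x :=
  sub_le_sub (le_ciSup (Finite.bddAbove_range x) i) (ciInf_le (Finite.bddBelow_range x) j)

section HilbertSeminorm

variable {n : ℕ} [NeZero n]

theorem hilbertSeminorm_le_iff {x : Fin n → ℝ} {c : ℝ} :
    hilbertSeminorm x ≤ c ↔ ∀ i j, x i - x j ≤ c := by
  refine ⟨fun h i j => (sub_le_hilbertSeminorm x i j).trans h, fun h => ?_⟩
  rw [hilbertSeminorm, sub_le_iff_le_add']
  refine ciSup_le fun i => ?_
  have : x i - c ≤ ⨅ j, x j := le_ciInf fun j => by linarith [h i j]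
  linarith

theorem hilbertSeminorm_add_le (x y : Fin n → ℝ) :
    hilbertSeminorm (x + y) ≤ hilbertSeminorm x + hilbertSeminorm y :=
  hilbertSeminorm_le_iff.2 fun i j => by
    simp only [Pi.add_apply]
    linarith [sub_le_hilbertSeminorm x i j, sub_le_hilbertSeminorm y i j]

theorem hilbertSeminorm_sub_le_sub_add_sub (x y z : Fin n → ℝ) :
    hilbertSeminorm (x - z) ≤ hilbertSeminorm (x - y) + hilbertSeminorm (y - z) := by
  simpa using hilbertSeminorm_add_le (x - y) (y - z)

theorem hilbertSeminorm_add_const (x : Fin n → ℝ) (c : ℝ) :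
    hilbertSeminorm (fun i => x i + c) = hilbertSeminorm x := by
  simp only [hilbertSeminorm, ← ciSup_add (Finite.bddAbove_range x),
    ← ciInf_add (Finite.bddBelow_range x)]
  ring

theorem hilbertSeminorm_add_const_sub (x y : Fin n → ℝ) (c : ℝ) :
    hilbertSeminorm ((fun i => x i + c) - y) = hilbertSeminorm (x - y) := by
  rw [← hilbertSeminorm_add_const (x - y) c]
  congr 1
  funext i
  simp only [Pi.sub_apply]
  ring

theorem hilbertSeminorm_sub_add_const (x y : Fin n → ℝ) (c : ℝ) :
    hilbertSeminorm (x - fun i => y i + c) = hilbertSeminorm (x - y) := by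
  rw [← hilbertSeminorm_add_const (x - y) (-c)]
  congr 1
  funext i
  simp only [Pi.sub_apply]
  ring

theorem hilbertSeminorm_le_two_mul_norm (x : Fin n → ℝ) : hilbertSeminorm x ≤ 2 * ‖x‖ :=
  hilbertSeminorm_le_iff.2 fun i j => by
    have hi := abs_le.mp ((Real.norm_eq_abs (x i)).symm.trans_le (norm_le_pi_norm x i))
    have hj := abs_le.mp ((Real.norm_eq_abs (x j)).symm.trans_le (norm_le_pi_norm x j))
    linarith [hi.2, hj.1]

theorem IsShapleyOperator.hilbertSeminorm_sub_le {T : (Fin n → ℝ) → Fin n → ℝ}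
    (hT : IsShapleyOperator T) (x y : Fin n → ℝ) :
    hilbertSeminorm (T x - T y) ≤ hilbertSeminorm (x - y) := by
  set M := ⨆ i, (x - y) i
  set m := ⨅ i, (x - y) i
  have hupper : T x ≤ fun i => T y i + M := hT.map_add_const y M ▸ hT.monotone fun i => by
    linarith [show x i - y i ≤ M from le_ciSup (Finite.bddAbove_range (x - y)) i]
  have hlower : (fun i => T y i + m) ≤ T x := hT.map_add_const y m ▸ hT.monotone fun i => by
    linarith [show m ≤ x i - y i from ciInf_le (Finite.bddBelow_range (x - y)) i]
  refine hilbertSeminorm_le_iff.2 fun i j => ?_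
  show T x i - T y i - (T x j - T y j) ≤ M - m
  linarith [hupper i, hlower j]

theorem IsShapleyOperator.hilbertSeminorm_iterate_comp_sub_le {T Ttil R : (Fin n → ℝ) → Fin n → ℝ}
    {η : ℝ} (hT : IsShapleyOperator T) (hTtil : ∀ x, ‖Ttil x - T x‖ ≤ η)
    (hR : ∀ x, ∃ c : ℝ, R x = fun i => x i + c) (j : ℕ) (u v : Fin n → ℝ) :
    hilbertSeminorm ((R ∘ Ttil)^[j] u - T^[j] v) ≤
      2 * j * η + hilbertSeminorm (T^[j] u - T^[j] v) := by
  induction j generalizing u v with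
  | zero => simp
  | succ j ih =>
    obtain ⟨c, hc⟩ := hR (Ttil u)
    have hTj := hT.iterate j
    have horacle : hilbertSeminorm (T^[j] (Ttil u) - T^[j + 1] u) ≤ 2 * η :=
      calc _ ≤ hilbertSeminorm (Ttil u - T u) := hTj.hilbertSeminorm_sub_le _ _
        _ ≤ 2 * η := (hilbertSeminorm_le_two_mul_norm _).trans (by linarith [hTtil u])
    calc hilbertSeminorm ((R ∘ Ttil)^[j + 1] u - T^[j + 1] v)
        = hilbertSeminorm ((R ∘ Ttil)^[j] (R (Ttil u)) - T^[j] (T v)) := rfl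
      _ ≤ 2 * j * η + hilbertSeminorm (T^[j] (R (Ttil u)) - T^[j] (T v)) := ih _ _
      _ = 2 * j * η + hilbertSeminorm (T^[j] (Ttil u) - T^[j + 1] v) := by
        rw [hc, hTj.map_add_const, hilbertSeminorm_add_const_sub]; rfl
      _ ≤ 2 * j * η + (2 * η + hilbertSeminorm (T^[j + 1] u - T^[j + 1] v)) := by
        grw [hilbertSeminorm_sub_le_sub_add_sub _ (T^[j + 1] u), horacle]
      _ = 2 * ↑(j + 1) * η + hilbertSeminorm (T^[j + 1] u - T^[j + 1] v) := by
        push_cast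
        ring

end HilbertSeminorm

theorem approximate_iteration_bound_general {n : ℕ} (hn : 0 < n)
    (T : (Fin n → ℝ) → (Fin n → ℝ))
    (hmono : Monotone T)
    (hhom : ∀ (x : Fin n → ℝ) (c : ℝ), T (fun i => x i + c) = fun i => T x i + c)
    (q : ℕ) (γ : ℝ) (hγ0 : 0 < γ) (hγ1 : γ < 1)
    (hcontr : ∀ x y : Fin n → ℝ,
      hilbertSeminorm (T^[q] x - T^[q] y) ≤ γ * hilbertSeminorm (x - y))
    (η : ℝ) (hη : 0 ≤ η)
    (Ttil : (Fin n → ℝ) → (Fin n → ℝ))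
    (hTtil : ∀ x : Fin n → ℝ, ‖Ttil x - T x‖ ≤ η)
    (R : (Fin n → ℝ) → (Fin n → ℝ))
    (hR : R = fun x => fun i => x i - ⨆ j, x j) :
    ∀ k : ℕ,
      hilbertSeminorm ((R ∘ Ttil)^[q * k] 0 - (R ∘ T)^[q * k] 0) ≤
        2 * q * η / (1 - γ) := by
  have : NeZero n := ⟨hn.ne'⟩
  have hT : IsShapleyOperator T := ⟨hmono, hhom⟩
  have hRshift : ∀ x, ∃ c : ℝ, R x = fun i => x i + c :=
    fun x => ⟨-⨆ j, x j, by simp only [hR, sub_eq_add_neg]⟩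
  have hblock : ∀ u v, hilbertSeminorm ((R ∘ Ttil)^[q] u - (R ∘ T)^[q] v) ≤
      2 * q * η + γ * hilbertSeminorm (u - v) := fun u v => by
    obtain ⟨c, hc⟩ := hT.exists_iterate_comp_eq_add_const hRshift q v
    rw [hc, hilbertSeminorm_sub_add_const]
    exact (hT.hilbertSeminorm_iterate_comp_sub_le hTtil hRshift q u v).trans
      (add_le_add le_rfl (hcontr u v))
  simp only [Function.iterate_mul]
  refine le_div_one_sub_of_le_add_mul hγ0.le hγ1 ?_ fun k => ?_
  · have : 0 ≤ 2 * q * η / (1 - γ) := div_nonneg (by positivity) (by linarith)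
    simpa [hilbertSeminorm] using this
  · simp only [Function.iterate_succ_apply']
    exact hblock _ _

/-- Stability of relative value iteration under approximate oracles: if `T^q`
is a `γ`-contraction in Hilbert's seminorm and `T̃` is an `η`-approximation of
`T` in the sup-norm, then the exact and approximate relative value iterations
started at `0` satisfy `‖x̃_{qk} - x_{qk}‖_H ≤ 2qη/(1-γ)` for all `k`. -/
theorem approximate_iteration_bound {n : ℕ} (hn : 0 < n)
    (T : (Fin n → ℝ) → (Fin n → ℝ))
    (hmono : Monotone T)
    (hhom : ∀ (x : Fin n → ℝ) (c : ℝ), T (fun i => x i + c) = fun i => T x i + c)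
    (q : ℕ) (hq : 1 ≤ q) (γ : ℝ) (hγ0 : 0 < γ) (hγ1 : γ < 1)
    (hcontr : ∀ x y : Fin n → ℝ,
      hilbertSeminorm (T^[q] x - T^[q] y) ≤ γ * hilbertSeminorm (x - y))
    (η : ℝ) (hη : 0 ≤ η)
    (Ttil : (Fin n → ℝ) → (Fin n → ℝ))
    (hTtil : ∀ x : Fin n → ℝ, ‖Ttil x - T x‖ ≤ η)
    (R : (Fin n → ℝ) → (Fin n → ℝ))
    (hR : R = fun x => fun i => x i - ⨆ j, x j) :
    ∀ k : ℕ,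
      hilbertSeminorm ((R ∘ Ttil)^[q * k] 0 - (R ∘ T)^[q * k] 0) ≤
        2 * q * η / (1 - γ) :=
  approximate_iteration_bound_general hn T hmono hhom q γ hγ0 hγ1 hcontr η hη Ttil hTtil R hR
end

section
/- Let T be the Shapley operator of a finite concurrent stochastic game on state space {1,…,n} that is unichain. Then the ergodic equation is solvable: there exist v ∈ ℝ^n and λ ∈ ℝ such that T(v) = λe + v. -/
/-- Reachability in the digraph associated to a nonnegative matrix `M`:
there is an arc from `i` to `j` whenever `M i j > 0`. -/
def Reaches {n : ℕ} (M : Matrix (Fin n) (Fin n) ℝ) : Fin n → Fin n → Prop :=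
  Relation.ReflTransGen (fun i j => 0 < M i j)

/-- `C` is a final (strongly connected) class of the digraph of `M`:
it is nonempty, strongly connected, and closed under the arcs of `M`. -/
def IsFinalClass {n : ℕ} (M : Matrix (Fin n) (Fin n) ℝ) (C : Set (Fin n)) : Prop :=
  C.Nonempty ∧ (∀ i ∈ C, ∀ j ∈ C, Reaches M i j) ∧ (∀ i ∈ C, ∀ j, 0 < M i j → j ∈ C)

/-- A nonnegative matrix is unichain if its digraph has a unique final
strongly connected component. -/
def Unichain {n : ℕ} (M : Matrix (Fin n) (Fin n) ℝ) : Prop :=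
  ∃! C : Set (Fin n), IsFinalClass M C

/-- The Shapley operator of a finite concurrent stochastic game with state space
`Fin n`, action sets `A i`, `B i`, payments `r` and transition probabilities `P`:
`T_i(v) = min_α max_β Σ_{a,b} α(a)β(b) (r_i^{ab} + Σ_j P_{ij}^{ab} v_j)`,
where `α`, `β` range over probability vectors on `A i` and `B i`. -/
noncomputable def shapleyOperator {n : ℕ} (A B : Fin n → Type)
    [∀ i, Fintype (A i)] [∀ i, Fintype (B i)]
    (r : ∀ i, A i → B i → ℝ) (P : ∀ i, A i → B i → Fin n → ℝ)
    (v : Fin n → ℝ) : Fin n → ℝ :=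
  fun i => ⨅ α : stdSimplex ℝ (A i), ⨆ β : stdSimplex ℝ (B i),
    ∑ a : A i, ∑ b : B i, α.1 a * β.1 b * (r i a b + ∑ j, P i a b j * v j)

/-!
Vanishing discount. For `β < 1`, `v ↦ T (β • v)` is a contraction; shifting its fixed point to
vanish at a chosen state gives `T (β • u) = c + u` with `c` bounded. If these `u` stay bounded as
`β → 1`, a limit point solves `T v = λ + v`. Otherwise `u / ‖u‖` accumulates at a fixed point of
norm one, vanishing at that state, of the recession operator: the Shapley operator of the game
without payments, which stays within bounded distance of `T`. Unichainness rules this out, since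
it makes the fixed points `w` of that operator constant: Min can keep the play inside
`{w = min w}` and Max inside `{w = max w}`, both sets are then closed for one pure policy pair,
so each contains a final class, and the two classes coincide.
-/

open Filter Topology

section StochasticVector

variable {ι : Type*} [Fintype ι] {p x : ι → ℝ} {c : ℝ}

lemma sum_mul_le_of_mem_stdSimplex (hp : p ∈ stdSimplex ℝ ι) (h : ∀ j, x j ≤ c) :
    ∑ j, p j * x j ≤ c :=
  calc ∑ j, p j * x j ≤ ∑ j, p j * c :=
        Finset.sum_le_sum fun j _ => mul_le_mul_of_nonneg_left (h j) (hp.1 j)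
    _ = c := by rw [← Finset.sum_mul, hp.2, one_mul]

lemma le_sum_mul_of_mem_stdSimplex (hp : p ∈ stdSimplex ℝ ι) (h : ∀ j, c ≤ x j) :
    c ≤ ∑ j, p j * x j :=
  calc c = ∑ j, p j * c := by rw [← Finset.sum_mul, hp.2, one_mul]
    _ ≤ ∑ j, p j * x j := Finset.sum_le_sum fun j _ => mul_le_mul_of_nonneg_left (h j) (hp.1 j)

lemma abs_sum_mul_le_of_mem_stdSimplex (hp : p ∈ stdSimplex ℝ ι) (h : ∀ j, |x j| ≤ c) :
    |∑ j, p j * x j| ≤ c :=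
  abs_le.2 ⟨le_sum_mul_of_mem_stdSimplex hp fun j => neg_le_of_abs_le (h j),
    sum_mul_le_of_mem_stdSimplex hp fun j => le_of_abs_le (h j)⟩

lemma sum_mul_const_add_of_mem_stdSimplex (hp : p ∈ stdSimplex ℝ ι) :
    ∑ j, p j * (c + x j) = c + ∑ j, p j * x j := by
  simp only [mul_add, Finset.sum_add_distrib, ← Finset.sum_mul, hp.2, one_mul]

lemma eq_of_sum_mul_le_of_mem_stdSimplex (hp : p ∈ stdSimplex ℝ ι) (h : ∀ j, c ≤ x j)
    (hsum : ∑ j, p j * x j ≤ c) {j : ι} (hj : 0 < p j) : x j = c := by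
  refine le_antisymm ?_ (h j)
  by_contra! hlt
  have : ∑ k, p k * c < ∑ k, p k * x k :=
    Finset.sum_lt_sum (fun k _ => mul_le_mul_of_nonneg_left (h k) (hp.1 k))
      ⟨j, Finset.mem_univ j, mul_lt_mul_of_pos_left hlt hj⟩
  rw [← Finset.sum_mul, hp.2, one_mul] at this
  linarith

lemma eq_of_le_sum_mul_of_mem_stdSimplex (hp : p ∈ stdSimplex ℝ ι) (h : ∀ j, x j ≤ c)
    (hsum : c ≤ ∑ j, p j * x j) {j : ι} (hj : 0 < p j) : x j = c := by
  have := eq_of_sum_mul_le_of_mem_stdSimplex (x := fun j => -x j) (c := -c) hp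
    (fun j => neg_le_neg (h j)) (by simpa [Finset.sum_neg_distrib] using neg_le_neg hsum) hj
  linarith

lemma exists_pos_of_mem_stdSimplex (hp : p ∈ stdSimplex ℝ ι) : ∃ j, 0 < p j := by
  obtain ⟨j, -, hj⟩ := Finset.exists_lt_of_sum_lt (f := 0) (s := Finset.univ) (by rw [hp.2]; simp)
  exact ⟨j, hj⟩

end StochasticVector

section MatrixGame

variable {X Y : Type*} [Fintype X] [Fintype Y]

noncomputable def matrixGameValue (G : X → Y → ℝ) : ℝ :=
  ⨅ α : stdSimplex ℝ X, ⨆ β : stdSimplex ℝ Y, ∑ a, ∑ b, α.1 a * β.1 b * G a b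

lemma matrixGameValue_smul (G : X → Y → ℝ) {s : ℝ} (hs : 0 ≤ s) :
    matrixGameValue (fun a b => s * G a b) = s * matrixGameValue G := by
  rw [matrixGameValue, matrixGameValue, Real.mul_iInf_of_nonneg hs]
  refine iInf_congr fun α => ?_
  rw [Real.mul_iSup_of_nonneg hs]
  refine iSup_congr fun β => ?_
  simp only [Finset.mul_sum]
  exact Finset.sum_congr rfl fun a _ => Finset.sum_congr rfl fun b _ => by ring

variable [Nonempty Y]

noncomputable def bestResponseValue (G : X → Y → ℝ) (α : X → ℝ) : ℝ :=
  Finset.univ.sup' Finset.univ_nonempty fun b => ∑ a, α a * G a b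

lemma iSup_payoff_eq_bestResponseValue (G : X → Y → ℝ) (α : X → ℝ) :
    ⨆ β : stdSimplex ℝ Y, ∑ a, ∑ b, α a * β.1 b * G a b = bestResponseValue G α := by
  classical
  have hpay : ∀ β : Y → ℝ, ∑ a, ∑ b, α a * β b * G a b = ∑ b, β b * ∑ a, α a * G a b := by
    intro β
    rw [Finset.sum_comm]
    simp only [Finset.mul_sum]
    exact Finset.sum_congr rfl fun b _ => Finset.sum_congr rfl fun a _ => by ring
  simp_rw [hpay]
  obtain ⟨b₀, -, hb₀⟩ := Finset.exists_mem_eq_sup' Finset.univ_nonempty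
    fun b => ∑ a, α a * G a b
  refine IsGreatest.csSup_eq ⟨⟨⟨_, ite_eq_mem_stdSimplex ℝ b₀⟩, ?_⟩, ?_⟩
  · simp [bestResponseValue, hb₀]
  · rintro _ ⟨β, rfl⟩
    exact sum_mul_le_of_mem_stdSimplex β.2 fun b =>
      Finset.le_sup' (fun b => ∑ a, α a * G a b) (Finset.mem_univ b)

lemma continuous_bestResponseValue (G : X → Y → ℝ) : Continuous (bestResponseValue G) :=
  Continuous.finset_sup'_apply _ fun _ _ =>
    continuous_finsetSum _ fun a _ => (continuous_apply a).mul continuous_const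

variable [Nonempty X]

lemma isLeast_matrixGameValue (G : X → Y → ℝ) :
    IsLeast (bestResponseValue G '' stdSimplex ℝ X) (matrixGameValue G) := by
  classical
  obtain ⟨α, hα, hmin⟩ := (isCompact_stdSimplex ℝ X).exists_isMinOn
    ⟨_, ite_eq_mem_stdSimplex ℝ (Classical.arbitrary X)⟩
    (continuous_bestResponseValue G).continuousOn
  have h : IsLeast (bestResponseValue G '' stdSimplex ℝ X) (bestResponseValue G α) :=
    ⟨⟨α, hα, rfl⟩, by rintro _ ⟨α', hα', rfl⟩; exact hmin hα'⟩
  simp_rw [matrixGameValue, iSup_payoff_eq_bestResponseValue, ← sInf_image', h.csInf_eq]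
  exact h

lemma exists_optimal_strategy (G : X → Y → ℝ) :
    ∃ α ∈ stdSimplex ℝ X, ∀ b, ∑ a, α a * G a b ≤ matrixGameValue G := by
  obtain ⟨⟨α, hα, hval⟩, -⟩ := isLeast_matrixGameValue G
  exact ⟨α, hα, fun b => hval ▸ Finset.le_sup' (fun b => ∑ a, α a * G a b) (Finset.mem_univ b)⟩

lemma exists_matrixGameValue_le (G : X → Y → ℝ) {α : X → ℝ} (hα : α ∈ stdSimplex ℝ X) :
    ∃ b, matrixGameValue G ≤ ∑ a, α a * G a b := by
  obtain ⟨b, -, hb⟩ := Finset.exists_mem_eq_sup' Finset.univ_nonempty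
    fun b => ∑ a, α a * G a b
  exact ⟨b, hb ▸ (isLeast_matrixGameValue G).2 ⟨α, hα, rfl⟩⟩

lemma matrixGameValue_le_add {G G' : X → Y → ℝ} {D : ℝ} (h : ∀ a b, G a b ≤ G' a b + D) :
    matrixGameValue G ≤ matrixGameValue G' + D := by
  obtain ⟨α, hα, hopt⟩ := exists_optimal_strategy G'
  obtain ⟨b, hb⟩ := exists_matrixGameValue_le G hα
  calc matrixGameValue G ≤ ∑ a, α a * G a b := hb
    _ ≤ ∑ a, α a * (D + G' a b) :=
        Finset.sum_le_sum fun a _ => mul_le_mul_of_nonneg_left (by linarith [h a b]) (hα.1 a)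
    _ = D + ∑ a, α a * G' a b := sum_mul_const_add_of_mem_stdSimplex hα
    _ ≤ matrixGameValue G' + D := by linarith [hopt b]

lemma abs_matrixGameValue_sub_le {G G' : X → Y → ℝ} {D : ℝ} (h : ∀ a b, |G a b - G' a b| ≤ D) :
    |matrixGameValue G - matrixGameValue G'| ≤ D := by
  have h₁ := matrixGameValue_le_add (G := G) (G' := G') (D := D)
    fun a b => by linarith [(abs_sub_le_iff.1 (h a b)).1]
  have h₂ := matrixGameValue_le_add (G := G') (G' := G) (D := D)
    fun a b => by linarith [(abs_sub_le_iff.1 (h a b)).2]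
  exact abs_sub_le_iff.2 ⟨by linarith, by linarith⟩

lemma matrixGameValue_const_add (G : X → Y → ℝ) (c : ℝ) :
    matrixGameValue (fun a b => c + G a b) = c + matrixGameValue G := by
  have h₁ := matrixGameValue_le_add (G := fun a b => c + G a b) (G' := G) (D := c)
    fun a b => by linarith
  have h₂ := matrixGameValue_le_add (G := G) (G' := fun a b => c + G a b) (D := -c)
    fun a b => by linarith
  linarith

lemma exists_forall_eq_of_matrixGameValue_le {G : X → Y → ℝ} {c : ℝ}
    (hval : matrixGameValue G ≤ c) (hG : ∀ a b, c ≤ G a b) : ∃ a, ∀ b, G a b = c := by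
  obtain ⟨α, hα, hopt⟩ := exists_optimal_strategy G
  obtain ⟨a, ha⟩ := exists_pos_of_mem_stdSimplex hα
  exact ⟨a, fun b =>
    eq_of_sum_mul_le_of_mem_stdSimplex hα (fun a => hG a b) ((hopt b).trans hval) ha⟩

lemma exists_eq_of_le_matrixGameValue {G : X → Y → ℝ} {c : ℝ}
    (hval : c ≤ matrixGameValue G) (hG : ∀ a b, G a b ≤ c) (a : X) : ∃ b, G a b = c := by
  classical
  obtain ⟨b, hb⟩ := exists_matrixGameValue_le G (ite_eq_mem_stdSimplex ℝ a)
  simp only [ite_mul, one_mul, zero_mul, Finset.sum_ite_eq, Finset.mem_univ, if_true] at hb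
  exact ⟨b, le_antisymm (hG a b) (hval.trans hb)⟩

end MatrixGame

section Digraph

variable {n : ℕ} {M : Matrix (Fin n) (Fin n) ℝ}

def IsAbsorbing (M : Matrix (Fin n) (Fin n) ℝ) (S : Set (Fin n)) : Prop :=
  ∀ i ∈ S, ∀ j, 0 < M i j → j ∈ S

lemma IsAbsorbing.mem_of_reaches {S : Set (Fin n)} (hS : IsAbsorbing M S) {i j : Fin n}
    (hi : i ∈ S) (h : Reaches M i j) : j ∈ S := by
  induction h with
  | refl => exact hi
  | tail _ hjk ih => exact hS _ ih _ hjk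

lemma isAbsorbing_setOf_reaches (i : Fin n) : IsAbsorbing M {j | Reaches M i j} :=
  fun _ hj _ hjk => hj.tail hjk

lemma IsAbsorbing.exists_isFinalClass_subset {S : Set (Fin n)} (hS : IsAbsorbing M S)
    (hne : S.Nonempty) : ∃ C ⊆ S, IsFinalClass M C := by
  obtain ⟨C, hCS, ⟨hCne, hC⟩, hmin⟩ :=
    exists_minimal_le_of_wellFoundedLT (fun C => C.Nonempty ∧ IsAbsorbing M C) S ⟨hne, hS⟩
  refine ⟨C, hCS, hCne, fun i hi j hj => ?_, hC⟩
  exact hmin ⟨⟨i, Relation.ReflTransGen.refl⟩, isAbsorbing_setOf_reaches i⟩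
    (fun k hk => hC.mem_of_reaches hi hk) hj

lemma Unichain.inter_nonempty (hM : Unichain M) {S S' : Set (Fin n)} (hS : IsAbsorbing M S)
    (hS' : IsAbsorbing M S') (hSne : S.Nonempty) (hS'ne : S'.Nonempty) : (S ∩ S').Nonempty := by
  obtain ⟨C, hCS, hC⟩ := hS.exists_isFinalClass_subset hSne
  obtain ⟨C', hC'S', hC'⟩ := hS'.exists_isFinalClass_subset hS'ne
  obtain ⟨i, hi⟩ := hC.1
  exact ⟨i, hCS hi, hC'S' (hM.unique hC hC' ▸ hi)⟩

end Digraph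

section ShapleyOperator

variable {n : ℕ} {A B : Fin n → Type} [∀ i, Fintype (A i)] [∀ i, Fintype (B i)]
  {r : ∀ i, A i → B i → ℝ} {P : ∀ i, A i → B i → Fin n → ℝ}

lemma shapleyOperator_apply (v : Fin n → ℝ) (i : Fin n) :
    shapleyOperator A B r P v i = matrixGameValue fun a b => r i a b + ∑ j, P i a b j * v j :=
  rfl

lemma shapleyOperator_zero_apply (v : Fin n → ℝ) (i : Fin n) :
    shapleyOperator A B 0 P v i = matrixGameValue fun a b => ∑ j, P i a b j * v j := by
  simp only [shapleyOperator_apply, Pi.zero_apply, zero_add]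

lemma shapleyOperator_zero_smul {s : ℝ} (hs : 0 ≤ s) (v : Fin n → ℝ) :
    shapleyOperator A B 0 P (s • v) = s • shapleyOperator A B 0 P v := by
  funext i
  have hscale : (fun a b => ∑ j, P i a b j * (s • v) j)
      = fun a b => s * ∑ j, P i a b j * v j := by
    funext a b
    rw [Finset.mul_sum]
    exact Finset.sum_congr rfl fun j _ => by rw [Pi.smul_apply, smul_eq_mul]; ring
  rw [Pi.smul_apply, shapleyOperator_zero_apply, shapleyOperator_zero_apply, hscale,
    matrixGameValue_smul _ hs, smul_eq_mul]

variable [∀ i, Nonempty (A i)] [∀ i, Nonempty (B i)]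

lemma lipschitzWith_one_shapleyOperator (hP : ∀ i a b, P i a b ∈ stdSimplex ℝ (Fin n)) :
    LipschitzWith 1 (shapleyOperator A B r P) := by
  refine LipschitzWith.of_dist_le_mul fun v w => ?_
  rw [NNReal.coe_one, one_mul, dist_pi_le_iff dist_nonneg]
  intro i
  rw [Real.dist_eq, shapleyOperator_apply, shapleyOperator_apply]
  refine abs_matrixGameValue_sub_le fun a b => ?_
  rw [add_sub_add_left_eq_sub, ← Finset.sum_sub_distrib]
  simp_rw [← mul_sub]
  exact abs_sum_mul_le_of_mem_stdSimplex (hP i a b) fun j =>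
    Real.dist_eq (v j) (w j) ▸ dist_le_pi_dist v w j

lemma shapleyOperator_const_add (hP : ∀ i a b, P i a b ∈ stdSimplex ℝ (Fin n))
    (v : Fin n → ℝ) (c : ℝ) :
    shapleyOperator A B r P (fun j => c + v j) = fun i => c + shapleyOperator A B r P v i := by
  funext i
  have hshift : (fun a b => r i a b + ∑ j, P i a b j * (c + v j))
      = fun a b => c + (r i a b + ∑ j, P i a b j * v j) := by
    funext a b
    rw [sum_mul_const_add_of_mem_stdSimplex (hP i a b)]
    ring
  rw [shapleyOperator_apply, shapleyOperator_apply, hshift, matrixGameValue_const_add]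

lemma exists_dist_shapleyOperator_zero_le :
    ∃ C, ∀ v, dist (shapleyOperator A B r P v) (shapleyOperator A B 0 P v) ≤ C := by
  obtain ⟨R, hR⟩ := Finite.exists_le fun x : Σ i, A i × B i => |r x.1 x.2.1 x.2.2|
  refine ⟨max R 0, fun v => (dist_pi_le_iff (le_max_right _ _)).2 fun i => ?_⟩
  rw [Real.dist_eq, shapleyOperator_apply, shapleyOperator_zero_apply]
  exact abs_matrixGameValue_sub_le fun a b => by
    simpa using (hR ⟨i, a, b⟩).trans (le_max_left R 0)

theorem exists_eq_const_of_shapleyOperator_zero_fixedPoint [Nonempty (Fin n)]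
    (hP : ∀ i a b, P i a b ∈ stdSimplex ℝ (Fin n))
    (huni : ∀ (σ : ∀ i, A i) (τ : ∀ i, B i), Unichain (Matrix.of fun i j => P i (σ i) (τ i) j))
    {w : Fin n → ℝ} (hw : shapleyOperator A B 0 P w = w) : ∃ c, w = fun _ => c := by
  obtain ⟨i₀, hi₀⟩ := Finite.exists_min w
  obtain ⟨i₁, hi₁⟩ := Finite.exists_max w
  have hval : ∀ i, matrixGameValue (fun a b => ∑ j, P i a b j * w j) = w i := fun i => by
    rw [← shapleyOperator_zero_apply, hw]
  have hmin_stay : ∀ i, ∃ a, w i = w i₀ → ∀ b j, 0 < P i a b j → w j = w i₀ := by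
    intro i
    by_cases hi : w i = w i₀
    · obtain ⟨a, ha⟩ := exists_forall_eq_of_matrixGameValue_le (hval i ▸ hi.le)
        fun a b => le_sum_mul_of_mem_stdSimplex (hP i a b) hi₀
      exact ⟨a, fun _ b j hj => eq_of_sum_mul_le_of_mem_stdSimplex (hP i a b) hi₀ (ha b).le hj⟩
    · exact ⟨Classical.arbitrary _, fun h => absurd h hi⟩
  choose σ hσ using hmin_stay
  have hmax_stay : ∀ i, ∃ b, w i = w i₁ → ∀ j, 0 < P i (σ i) b j → w j = w i₁ := by
    intro i
    by_cases hi : w i = w i₁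
    · obtain ⟨b, hb⟩ := exists_eq_of_le_matrixGameValue (hval i ▸ hi.ge)
        (fun a b => sum_mul_le_of_mem_stdSimplex (hP i a b) hi₁) (σ i)
      exact ⟨b, fun _ j hj => eq_of_le_sum_mul_of_mem_stdSimplex (hP i (σ i) b) hi₁ hb.ge hj⟩
    · exact ⟨Classical.arbitrary _, fun h => absurd h hi⟩
  choose τ hτ using hmax_stay
  obtain ⟨j, hj₀, hj₁⟩ := (huni σ τ).inter_nonempty (S := {j | w j = w i₀})
    (S' := {j | w j = w i₁}) (fun i hi j hj => hσ i hi (τ i) j hj) (fun i hi j hj => hτ i hi j hj)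
    ⟨i₀, rfl⟩ ⟨i₁, rfl⟩
  refine ⟨w i₀, funext fun k => le_antisymm ?_ (hi₀ k)⟩
  calc w k ≤ w i₁ := hi₁ k
    _ = w i₀ := hj₁.symm.trans hj₀

end ShapleyOperator

section ErgodicEquation

variable {ι : Type*} [Fintype ι] {T Trec : (ι → ℝ) → ι → ℝ}

lemma exists_discounted_solution (hT : LipschitzWith 1 T)
    (hTadd : ∀ v (c : ℝ), T (fun i => c + v i) = fun i => c + T v i) (i₀ : ι)
    {β : ℝ} (hβ0 : 0 ≤ β) (hβ1 : β < 1) :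
    ∃ (u : ι → ℝ) (c : ℝ), u i₀ = 0 ∧ |c| ≤ ‖T 0‖ ∧ T (β • u) = fun i => c + u i := by
  have hcontr : ContractingWith ⟨β, hβ0⟩ fun v => T (β • v) := by
    refine ⟨hβ1, ?_⟩
    have := hT.comp (lipschitzWith_smul β)
    rwa [one_mul, Real.nnnorm_of_nonneg hβ0] at this
  set v := ContractingWith.fixedPoint _ hcontr
  have hv : T (β • v) = v := hcontr.fixedPoint_isFixedPt
  have hnorm : (1 - β) * ‖v‖ ≤ ‖T 0‖ := by
    have : ‖v‖ ≤ β * ‖v‖ + ‖T 0‖ := calc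
      ‖v‖ ≤ dist (T (β • v)) (T 0) + ‖T 0‖ := by
          rw [dist_eq_norm, hv]; exact norm_le_norm_sub_add v (T 0)
      _ ≤ β * ‖v‖ + ‖T 0‖ := by
          have := hT.dist_le_mul (β • v) 0
          rw [NNReal.coe_one, one_mul, dist_zero_right, norm_smul, Real.norm_of_nonneg hβ0] at this
          linarith
    linarith
  refine ⟨fun i => -v i₀ + v i, (1 - β) * v i₀, by simp, ?_, ?_⟩
  · rw [abs_mul, abs_of_nonneg (by linarith)]
    exact (mul_le_mul_of_nonneg_left (norm_le_pi_norm v i₀) (by linarith)).trans hnorm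
  · have hshift : β • (fun i => -v i₀ + v i) = fun i => -(β * v i₀) + (β • v) i := by
      funext i
      simp only [Pi.smul_apply, smul_eq_mul]
      ring
    rw [hshift, hTadd, hv]
    funext i
    ring

lemma not_tendsto_norm_atTop_of_dist_le [Nonempty ι] (hTrec : Continuous Trec)
    (hhom : ∀ s : ℝ, 0 ≤ s → ∀ v, Trec (s • v) = s • Trec v)
    (hfix : ∀ w, Trec w = w → ∃ c, w = fun _ => c) (i₀ : ι) {β : ℕ → ℝ} {u : ℕ → ι → ℝ}
    {D : ℝ} (hβ : Tendsto β atTop (𝓝 1)) (hu₀ : ∀ k, u k i₀ = 0)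
    (hD : ∀ k, dist (Trec (β k • u k)) (u k) ≤ D) :
    ¬ Tendsto (fun k => ‖u k‖) atTop atTop := by
  intro hu
  set w : ℕ → ι → ℝ := fun k => ‖u k‖⁻¹ • u k
  have hpos : ∀ᶠ k in atTop, 0 < ‖u k‖ := hu.eventually_gt_atTop 0
  have hw_le : ∀ k, w k ∈ Metric.closedBall 0 1 := fun k => by
    rw [mem_closedBall_zero_iff, norm_smul, norm_inv, norm_norm]
    exact inv_mul_le_one_of_le₀ le_rfl (norm_nonneg _)
  have hdist : ∀ᶠ k in atTop, dist (Trec (β k • w k)) (w k) ≤ D / ‖u k‖ := by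
    filter_upwards [hpos] with k hk
    have hu_eq : ‖u k‖ • w k = u k := by simp only [w, smul_smul, mul_inv_cancel₀ hk.ne', one_smul]
    rw [le_div_iff₀ hk, mul_comm, ← Real.norm_of_nonneg hk.le, ← dist_smul₀, ← hhom _ hk.le,
      smul_comm, hu_eq]
    exact hD k
  obtain ⟨w₀, -, φ, hφ, hwφ⟩ := tendsto_subseq_of_bounded Metric.isBounded_closedBall hw_le
  have hφ' := hφ.tendsto_atTop
  have hfixed : Trec w₀ = w₀ := by
    have h₁ : Tendsto (fun q => Trec (β (φ q) • w (φ q))) atTop (𝓝 (Trec w₀)) :=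
      (hTrec.tendsto w₀).comp (by simpa using (hβ.comp hφ').smul hwφ)
    have h₂ : Tendsto (fun q => dist (Trec (β (φ q) • w (φ q))) (w (φ q))) atTop (𝓝 0) :=
      squeeze_zero' (Eventually.of_forall fun _ => dist_nonneg) (hφ'.eventually hdist)
        ((tendsto_const_nhds.div_atTop hu).comp hφ')
    exact dist_eq_zero.1 (tendsto_nhds_unique (h₁.dist hwφ) h₂)
  have hw₀i₀ : w₀ i₀ = 0 := (isClosed_eq (continuous_apply i₀) continuous_const).mem_of_tendsto
    hwφ (Eventually.of_forall fun q => by simp [w, hu₀])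
  have hw₀norm : ‖w₀‖ = 1 := (isClosed_eq continuous_norm continuous_const).mem_of_tendsto hwφ
    ((hφ'.eventually hpos).mono fun q hq => norm_smul_inv_norm (norm_pos_iff.1 hq))
  obtain ⟨c, rfl⟩ := hfix w₀ hfixed
  obtain rfl : c = 0 := hw₀i₀
  simp at hw₀norm

lemma exists_ergodic_solution_of_frequently_bounded [Nonempty ι] (hT : Continuous T) {β : ℕ → ℝ}
    {u : ℕ → ι → ℝ} {c : ℕ → ℝ} {K : ℝ} (hβ : Tendsto β atTop (𝓝 1))
    (hbdd : ∃ᶠ k in atTop, ‖u k‖ ≤ K) (heq : ∀ k, T (β k • u k) = fun i => c k + u k i) :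
    ∃ (v : ι → ℝ) (lam : ℝ), T v = fun i => lam + v i := by
  obtain ⟨v, -, φ, hφ, hv⟩ := tendsto_subseq_of_frequently_bounded
    (Metric.isBounded_closedBall (x := 0) (r := K))
    (hbdd.mono fun k hk => mem_closedBall_zero_iff.2 hk)
  have hTv : Tendsto (fun q => T (β (φ q) • u (φ q))) atTop (𝓝 (T v)) :=
    (hT.tendsto v).comp (by simpa using (hβ.comp hφ.tendsto_atTop).smul hv)
  have hc : ∀ i, Tendsto (fun q => c (φ q)) atTop (𝓝 (T v i - v i)) := fun i => by
    simpa [heq] using (tendsto_pi_nhds.1 hTv i).sub (tendsto_pi_nhds.1 hv i)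
  obtain ⟨i₀⟩ := ‹Nonempty ι›
  exact ⟨v, T v i₀ - v i₀, funext fun i => by linarith [tendsto_nhds_unique (hc i) (hc i₀)]⟩

theorem exists_ergodic_solution_of_recession [Nonempty ι] (hT : LipschitzWith 1 T)
    (hTadd : ∀ v (c : ℝ), T (fun i => c + v i) = fun i => c + T v i)
    (hTrec : Continuous Trec) (hhom : ∀ s : ℝ, 0 ≤ s → ∀ v, Trec (s • v) = s • Trec v)
    {C : ℝ} (hC : ∀ v, dist (T v) (Trec v) ≤ C) (hfix : ∀ w, Trec w = w → ∃ c, w = fun _ => c) :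
    ∃ (v : ι → ℝ) (lam : ℝ), T v = fun i => lam + v i := by
  obtain ⟨i₀⟩ := ‹Nonempty ι›
  set β : ℕ → ℝ := fun k => 1 - 1 / (k + 1)
  have hβ : Tendsto β atTop (𝓝 1) := by
    simpa [β] using (tendsto_const_nhds (x := (1 : ℝ))).sub tendsto_one_div_add_atTop_nhds_zero_nat
  have hβ0 : ∀ k, 0 ≤ β k := fun k => sub_nonneg.2 (div_le_one_of_le₀ (by simp) (by positivity))
  have hβ1 : ∀ k, β k < 1 := fun k => sub_lt_self 1 (by positivity)
  choose u c hu₀ hc heq using fun k => exists_discounted_solution hT hTadd i₀ (hβ0 k) (hβ1 k)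
  by_cases hu : Tendsto (fun k => ‖u k‖) atTop atTop
  · refine absurd hu (not_tendsto_norm_atTop_of_dist_le hTrec hhom hfix i₀ hβ hu₀
      (D := C + ‖T 0‖) fun k => ?_)
    have hdefect : dist (T (β k • u k)) (u k) ≤ ‖T 0‖ := by
      rw [heq]
      exact (dist_pi_le_iff (abs_nonneg _)).2 (fun i => by simp) |>.trans (hc k)
    linarith [dist_triangle (Trec (β k • u k)) (T (β k • u k)) (u k),
      dist_comm (Trec (β k • u k)) (T (β k • u k)), hC (β k • u k)]
  · simp only [tendsto_atTop, not_forall, Filter.not_eventually, not_le] at hu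
    obtain ⟨K, hK⟩ := hu
    exact exists_ergodic_solution_of_frequently_bounded hT.continuous hβ (hK.mono fun _ => le_of_lt) heq

end ErgodicEquation

/-- For a unichain finite concurrent stochastic game, the ergodic equation
`T(v) = λe + v` is solvable. -/
theorem ergodic_equation_solvable_of_unichain {n : ℕ} (hn : 0 < n)
    (A B : Fin n → Type)
    [∀ i, Fintype (A i)] [∀ i, Fintype (B i)]
    [∀ i, Nonempty (A i)] [∀ i, Nonempty (B i)]
    (r : ∀ i, A i → B i → ℝ) (P : ∀ i, A i → B i → Fin n → ℝ)
    (hP0 : ∀ i a b j, 0 ≤ P i a b j) (hP1 : ∀ i a b, ∑ j, P i a b j = 1)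
    (huni : ∀ (σ : ∀ i, A i) (τ : ∀ i, B i),
      Unichain (Matrix.of fun i j => P i (σ i) (τ i) j)) :
    ∃ (v : Fin n → ℝ) (lam : ℝ),
      shapleyOperator A B r P v = fun i => lam + v i := by
  have : Nonempty (Fin n) := ⟨⟨0, hn⟩⟩
  have hP : ∀ i a b, P i a b ∈ stdSimplex ℝ (Fin n) := fun i a b => ⟨hP0 i a b, hP1 i a b⟩
  obtain ⟨C, hC⟩ := exists_dist_shapleyOperator_zero_le (r := r) (P := P)
  exact exists_ergodic_solution_of_recession (lipschitzWith_one_shapleyOperator hP)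
    (shapleyOperator_const_add hP) (lipschitzWith_one_shapleyOperator hP).continuous
    (fun _ hs v => shapleyOperator_zero_smul hs v) hC
    (fun _ hw => exists_eq_const_of_shapleyOperator_zero_fixedPoint hP huni hw)
end
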